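/- arXiv:1412.3928 — 6 statements merged into one kernel-verified Lean document; each statement's English description precedes it below -/
import Mathlib

section
/- Let -1 < a < 1/2 and define q(z) = z^3 + (3-2a)z^2 + (a^2-2)z - a^2 + 2a - 2. Then q has exactly one root in the open interval (-1, a). -/
open Polynomial in
theorem cubic_roots_card (a : ℝ) (s : Finset ℝ)
    (hs : ∀ z ∈ s, z^3 + (3 - 2*a)*z^2 + (a^2 - 2)*z - a^2 + 2*a - 2 = 0) :
    s.card ≤ 3 := by
  have hdeg : (X^3 + C (3-2*a) * X^2 + C (a^2-2) * X + C (-a^2 + 2*a - 2) : ℝ[X]).natDegree = 3 := by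
    compute_degree!
  set P : ℝ[X] := X^3 + C (3-2*a) * X^2 + C (a^2-2) * X + C (-a^2 + 2*a - 2) with hP
  have hP0 : P ≠ 0 := by
    intro h; rw [h] at hdeg; simp at hdeg
  have hsub : s ⊆ P.roots.toFinset := by
    intro z hz
    rw [Multiset.mem_toFinset, mem_roots hP0]
    have h := hs z hz
    show P.eval z = 0
    simp only [hP, eval_add, eval_mul, eval_pow, eval_X, eval_C]
    nlinarith [h]
  calc s.card ≤ P.roots.toFinset.card := Finset.card_le_card hsub
    _ ≤ Multiset.card P.roots := P.roots.toFinset_card_le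
    _ ≤ 3 := hdeg ▸ P.card_roots'

theorem stmt_1 (a : ℝ) (ha : -1 < a) (ha' : a < 1/2)
    (q : ℝ → ℝ)
    (hq : ∀ z, q z = z^3 + (3 - 2*a)*z^2 + (a^2 - 2)*z - a^2 + 2*a - 2) :
    ∃! z, z ∈ Set.Ioo (-1 : ℝ) a ∧ q z = 0 := by
  have hqf : q = fun z => z^3 + (3 - 2*a)*z^2 + (a^2 - 2)*z - a^2 + 2*a - 2 :=
    funext hq
  have hcont : Continuous q := by rw [hqf]; continuity
  have hqm1 : q (-1) = 2 - 2*a^2 := by rw [hq]; ring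
  have hqa : q a = 2*a^2 - 2 := by rw [hq]; ring
  have hq3 : q 3 = 46 - 16*a + 2*a^2 := by rw [hq]; ring
  have hqm10 : q (-10) = -682 - 198*a - 11*a^2 := by rw [hq]; ring
  have ha2 : a^2 < 1 := by nlinarith
  have hIVT : ∀ x y : ℝ, x < y → q x < 0 → 0 < q y →
      ∃ z ∈ Set.Ioo x y, q z = 0 := by
    intro x y hxy hx hy
    obtain ⟨z, hz, hz0⟩ := intermediate_value_Ioo (le_of_lt hxy) hcont.continuousOn
      (Set.mem_Ioo.mpr ⟨hx, hy⟩)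
    exact ⟨z, hz, hz0⟩
  have hIVT' : ∀ x y : ℝ, x < y → 0 < q x → q y < 0 →
      ∃ z ∈ Set.Ioo x y, q z = 0 := by
    intro x y hxy hx hy
    obtain ⟨z, hz, hz0⟩ := intermediate_value_Ioo' (le_of_lt hxy) hcont.continuousOn
      (Set.mem_Ioo.mpr ⟨hy, hx⟩)
    exact ⟨z, hz, hz0⟩
  obtain ⟨z₀, hz₀, hz₀0⟩ : ∃ z ∈ Set.Ioo (-1 : ℝ) a, q z = 0 := by
    refine hIVT' (-1) a ha ?_ ?_ <;> [rw [hqm1]; rw [hqa]] <;> nlinarith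
  refine ⟨z₀, ⟨hz₀, hz₀0⟩, ?_⟩
  rintro z₁ ⟨hz₁, hz₁0⟩
  by_contra hne
  -- two distinct roots in (-1,a); also roots in (a,3) and (-10,-1): four roots of a cubic
  obtain ⟨r₃, hr₃, hr₃0⟩ : ∃ z ∈ Set.Ioo a 3, q z = 0 := by
    refine hIVT a 3 (by linarith) ?_ ?_ <;> [rw [hqa]; rw [hq3]] <;> nlinarith
  obtain ⟨r₄, hr₄, hr₄0⟩ : ∃ z ∈ Set.Ioo (-10 : ℝ) (-1), q z = 0 := by
    refine hIVT (-10) (-1) (by norm_num) ?_ ?_ <;> [rw [hqm10]; rw [hqm1]] <;> nlinarith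
  obtain ⟨hz₀1, hz₀2⟩ := hz₀
  obtain ⟨hz₁1, hz₁2⟩ := hz₁
  obtain ⟨hr₃1, hr₃2⟩ := hr₃
  obtain ⟨hr₄1, hr₄2⟩ := hr₄
  have hcard := cubic_roots_card a {z₀, z₁, r₃, r₄} (by
    intro z hz
    simp only [Finset.mem_insert, Finset.mem_singleton] at hz
    rcases hz with rfl | rfl | rfl | rfl
    · rw [← hq]; exact hz₀0
    · rw [← hq]; exact hz₁0
    · rw [← hq]; exact hr₃0
    · rw [← hq]; exact hr₄0)
  have h4 : ({z₀, z₁, r₃, r₄} : Finset ℝ).card = 4 := by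
    rw [Finset.card_insert_of_notMem, Finset.card_insert_of_notMem,
      Finset.card_insert_of_notMem, Finset.card_singleton]
    · simp only [Finset.mem_singleton]; intro h; linarith [h ▸ hr₃1]
    · simp only [Finset.mem_insert, Finset.mem_singleton]
      push_neg
      constructor <;> intro h <;> linarith [h ▸ hz₁2]
    · simp only [Finset.mem_insert, Finset.mem_singleton]
      push_neg
      refine ⟨fun h => hne h.symm, ?_, ?_⟩ <;> intro h <;> linarith [h ▸ hz₀2]
  omega
end

section
/- Let -1 < a < 1/2, let z ∈ (-1, a) satisfy z^3 + (3-2a)z^2 + (a^2-2)z - a^2 + 2a - 2 = 0, and let p be the cubic polynomial p(x) = (x-z)(x-a)(x-1)/(2(1+z)(1+a)) - (x^2-1)(x-a)/((1-z^2)(z-a)) - (x^2-1)(x-z)/((1-a^2)(z-a)) + (x+1)(x-z)(x-a)/(2(1-z)(1-a)). Then the derivative of p vanishes at z: p'(z) = 0. -/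
/-!
The cubic `p` is the Lagrange interpolant taking the alternating values `-1, 1, -1, 1` at the
nodes `-1, z, a, 1`. Differentiating its Lagrange form at the node `z` and clearing denominators
gives `p'(z) = -q(z) / ((1 + z) (1 - a) (z - a))`, so `p'(z) = 0` exactly when `q(z) = 0`.
-/

section

variable {𝕜 : Type*} [NontriviallyNormedField 𝕜]

theorem hasDerivAt_sub_mul_sub_mul_sub (r s t x : 𝕜) :
    HasDerivAt (fun y => (y - r) * (y - s) * (y - t))
      ((x - s) * (x - t) + (x - r) * (x - t) + (x - r) * (x - s)) x := by
  have hid : HasDerivAt (fun y : 𝕜 => y) 1 x := hasDerivAt_id' x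
  exact (((hid.sub_const r).mul (hid.sub_const s)).mul (hid.sub_const t)).congr_deriv
    (by simp only [Pi.mul_apply]; ring)

def alternatingInterpolant (a z : 𝕜) (x : 𝕜) : 𝕜 :=
  (x - z)*(x - a)*(x - 1) / (2*(1 + z)*(1 + a))
    - (x^2 - 1)*(x - a) / ((1 - z^2)*(z - a))
    - (x^2 - 1)*(x - z) / ((1 - a^2)*(z - a))
    + (x + 1)*(x - z)*(x - a) / (2*(1 - z)*(1 - a))

theorem hasDerivAt_alternatingInterpolant [CharZero 𝕜] {a z : 𝕜}
    (hz₁ : 1 + z ≠ 0) (hz₂ : 1 - z ≠ 0) (ha₁ : 1 + a ≠ 0) (ha₂ : 1 - a ≠ 0) (hza : z - a ≠ 0) :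
    HasDerivAt (alternatingInterpolant a z)
      (-(z^3 + (3 - 2*a)*z^2 + (a^2 - 2)*z - a^2 + 2*a - 2) / ((1 + z)*(1 - a)*(z - a))) z := by
  have hfactored : alternatingInterpolant a z = fun x =>
      (x - z)*(x - a)*(x - 1) / (2*(1 + z)*(1 + a))
        - (x - (-1))*(x - 1)*(x - a) / ((1 - z^2)*(z - a))
        - (x - (-1))*(x - 1)*(x - z) / ((1 - a^2)*(z - a))
        + (x - (-1))*(x - z)*(x - a) / (2*(1 - z)*(1 - a)) := by
    funext x
    simp only [alternatingInterpolant]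
    ring
  rw [hfactored]
  refine ((((hasDerivAt_sub_mul_sub_mul_sub z a 1 z).div_const _).sub
    ((hasDerivAt_sub_mul_sub_mul_sub (-1) 1 a z).div_const _)).sub
    ((hasDerivAt_sub_mul_sub_mul_sub (-1) 1 z z).div_const _)).add
    ((hasDerivAt_sub_mul_sub_mul_sub (-1) z a z).div_const _) |>.congr_deriv ?_
  have hz : 1 - z^2 ≠ 0 := by
    rw [show 1 - z^2 = (1 + z) * (1 - z) by ring]; exact mul_ne_zero hz₁ hz₂
  have ha : 1 - a^2 ≠ 0 := by
    rw [show 1 - a^2 = (1 + a) * (1 - a) by ring]; exact mul_ne_zero ha₁ ha₂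
  field_simp
  ring

end

theorem stmt_6 (a z : ℝ) (ha : -1 < a) (ha' : a < 1/2)
    (hz : -1 < z) (hza : z < a)
    (hroot : z^3 + (3 - 2*a)*z^2 + (a^2 - 2)*z - a^2 + 2*a - 2 = 0)
    (p : ℝ → ℝ)
    (hp : ∀ x, p x = (x - z)*(x - a)*(x - 1) / (2*(1 + z)*(1 + a))
        - (x^2 - 1)*(x - a) / ((1 - z^2)*(z - a))
        - (x^2 - 1)*(x - z) / ((1 - a^2)*(z - a))
        + (x + 1)*(x - z)*(x - a) / (2*(1 - z)*(1 - a))) :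
    deriv p z = 0 := by
  have hp' : p = alternatingInterpolant a z := funext hp
  rw [hp', (hasDerivAt_alternatingInterpolant (by linarith) (by linarith) (by linarith)
    (by linarith) (by linarith)).deriv, hroot, neg_zero, zero_div]
end

section
/- Let -1 < a < 1/2, let z ∈ (-1, a) satisfy z^3 + (3-2a)z^2 + (a^2-2)z - a^2 + 2a - 2 = 0, let b = (2(1-a)(1+z) + z(a+z)) / (2 - a + z), and let p be the cubic polynomial p(x) = (x-z)(x-a)(x-1)/(2(1+z)(1+a)) - (x^2-1)(x-a)/((1-z^2)(z-a)) - (x^2-1)(x-z)/((1-a^2)(z-a)) + (x+1)(x-z)(x-a)/(2(1-z)(1-a)). Then p(b) = -1. -/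
set_option maxHeartbeats 4000000 in
theorem stmt_7 (a z b : ℝ) (ha : -1 < a) (ha' : a < 1/2)
    (hz : -1 < z) (hza : z < a)
    (hroot : z^3 + (3 - 2*a)*z^2 + (a^2 - 2)*z - a^2 + 2*a - 2 = 0)
    (hb : b = (2*(1 - a)*(1 + z) + z*(a + z)) / (2 - a + z))
    (p : ℝ → ℝ)
    (hp : ∀ x, p x = (x - z)*(x - a)*(x - 1) / (2*(1 + z)*(1 + a))
        - (x^2 - 1)*(x - a) / ((1 - z^2)*(z - a))
        - (x^2 - 1)*(x - z) / ((1 - a^2)*(z - a))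
        + (x + 1)*(x - z)*(x - a) / (2*(1 - z)*(1 - a))) :
    p b = -1 := by
  have h1 : (1:ℝ) + z ≠ 0 := by linarith
  have h2 : (1:ℝ) + a ≠ 0 := by linarith
  have h3 : z - a ≠ 0 := by linarith
  have h4 : (1:ℝ) - z ≠ 0 := by nlinarith
  have h5 : (1:ℝ) - a ≠ 0 := by linarith
  have h6 : (2:ℝ) - a + z ≠ 0 := by linarith
  have h7 : (1:ℝ) - z^2 ≠ 0 := by nlinarith
  have h8 : (1:ℝ) - a^2 ≠ 0 := by nlinarith
  rw [hp, hb]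
  field_simp
  ring
end

section
/- Let E ⊆ ℝ be compact, let x_1 > x_2 > ⋯ > x_n be points of E with -1 < x_n and x_1 < 1, and let ω(x) = ∏_{k=1}^n (x - x_k). Assume ±1 ∈ E and |ω(1)| = |ω(-1)| = sup_{x∈E} |ω(x)|. Let Ω(x) = (1 - x^2)ω(x), with nodes {x_1,…,x_n, 1, -1}. Then the Lebesgue constant of Lagrange interpolation on E at the augmented nodes satisfies Λ(Ω, E) ≤ 5·Λ(ω, E) + 1, where Λ(ω, E) = sup_{x∈E} ∑_{k=1}^n |ω(x)/(ω'(x_k)(x - x_k))| and Λ(Ω, E) is defined analogously with the n+2 nodes. -/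
/-!
At a node `x k` the Lagrange basis function of `Ω` is `(1 - t²) / (1 - x_k²)` times that of `ω`.
Partial fractions in `t` split this factor into `1` plus the multiples `(1 + t) / 2` and
`(1 - t) / 2` of the terms `ω t / (ω'(x_k) (1 ∓ x_k))`, and since `|ω t| ≤ |ω (±1)|` on `E` those are
bounded by the basis functions of `ω` at `±1`. Summing over the nodes, the interior part of the
Lebesgue function of `Ω` is at most `λ(t) + λ(1) + λ(-1) ≤ 3 Λ(ω)`. The basis functions of `Ω` at
`±1` are `(1 ± t) / 2 · ω t / ω (±1)`, and they add up to at most `1`.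
-/

open Finset

noncomputable def lebesgueFun {n : ℕ} (ω : ℝ → ℝ) (x : Fin n → ℝ) (t : ℝ) : ℝ :=
  ∑ k, |ω t / (deriv ω (x k) * (t - x k))|

lemma lebesgueFun_nonneg {n : ℕ} (ω : ℝ → ℝ) (x : Fin n → ℝ) (t : ℝ) :
    0 ≤ lebesgueFun ω x t :=
  sum_nonneg fun _ _ => abs_nonneg _

lemma abs_mul_div_mul_le (a b c : ℝ) : |a * b / (c * a)| ≤ |b / c| := by
  rcases eq_or_ne a 0 with rfl | ha
  · simp
  · rw [mul_comm a b, mul_div_mul_right b c ha]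

lemma bddAbove_lebesgueFun_image {E : Set ℝ} (hE : IsCompact E) {n : ℕ} {x : Fin n → ℝ}
    {ω : ℝ → ℝ} (hω : ∀ t, ω t = ∏ k, (t - x k)) :
    BddAbove (lebesgueFun ω x '' E) := by
  obtain ⟨M, hM⟩ := hE.bddAbove_image
    (f := fun t => ∑ k, |(∏ j ∈ univ.erase k, (t - x j)) / deriv ω (x k)|) (by fun_prop)
  refine ⟨M, ?_⟩
  rintro _ ⟨t, ht, rfl⟩
  refine (sum_le_sum fun k _ => ?_).trans (hM ⟨t, ht, rfl⟩)
  rw [hω, ← mul_prod_erase univ _ (mem_univ k)]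
  exact abs_mul_div_mul_le _ _ _

lemma deriv_one_sub_sq_mul {ω : ℝ → ℝ} {p : ℝ} (hω : DifferentiableAt ℝ ω p) :
    deriv (fun t => (1 - t ^ 2) * ω t) p = -2 * p * ω p + (1 - p ^ 2) * deriv ω p := by
  have h := ((hasDerivAt_pow 2 p).const_sub 1).mul hω.hasDerivAt
  rw [show (fun t => (1 - t ^ 2) * ω t) = (fun t => 1 - t ^ 2) * ω from rfl, h.deriv]
  push_cast
  ring

lemma abs_one_sub_sq_mul_div_le {t x w w₁ w₂ d : ℝ} (ht : t ∈ Set.Icc (-1) 1)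
    (h₁ : |w| ≤ |w₁|) (h₂ : |w| ≤ |w₂|) :
    |(1 - t ^ 2) * w / ((1 - x ^ 2) * d * (t - x))| ≤
      |w / (d * (t - x))| + |w₁ / (d * (1 - x))| + |w₂ / (d * (-1 - x))| := by
  obtain ⟨ht₁, ht₂⟩ := ht
  by_cases hdeg : d = 0 ∨ t = x ∨ 1 - x ^ 2 = 0
  · have : (1 - x ^ 2) * d * (t - x) = 0 := by
      rcases hdeg with rfl | rfl | h <;> simp [*]
    rw [this, div_zero, abs_zero]
    positivity
  push Not at hdeg
  obtain ⟨hd, htx, hx⟩ := hdeg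
  have hpf : (1 - t ^ 2) * w / ((1 - x ^ 2) * d * (t - x)) =
      w / (d * (t - x)) - (1 + t) / 2 * (w / (d * (1 - x)))
        - (1 - t) / 2 * (w / (d * (-1 - x))) := by
    have : t - x ≠ 0 := sub_ne_zero.mpr htx
    have : 1 - x ≠ 0 := fun h => hx (by linear_combination (1 + x) * h)
    have : -1 - x ≠ 0 := fun h => hx (by linear_combination (x - 1) * h)
    field_simp
    ring
  have hB : (1 + t) / 2 * |w / (d * (1 - x))| ≤ |w₁ / (d * (1 - x))| := by
    rw [abs_div, abs_div]
    have : |w| / |d * (1 - x)| ≤ |w₁| / |d * (1 - x)| := by gcongr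
    nlinarith [div_nonneg (abs_nonneg w) (abs_nonneg (d * (1 - x)))]
  have hC : (1 - t) / 2 * |w / (d * (-1 - x))| ≤ |w₂ / (d * (-1 - x))| := by
    rw [abs_div, abs_div]
    have : |w| / |d * (-1 - x)| ≤ |w₂| / |d * (-1 - x)| := by gcongr
    nlinarith [div_nonneg (abs_nonneg w) (abs_nonneg (d * (-1 - x)))]
  rw [hpf]
  refine (abs_sub _ _).trans ?_
  rw [abs_mul ((1 - t) / 2), abs_of_nonneg (by linarith : 0 ≤ (1 - t) / 2)]
  refine add_le_add ((abs_sub _ _).trans ?_) hC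
  rw [abs_mul, abs_of_nonneg (by linarith : 0 ≤ (1 + t) / 2)]
  exact add_le_add le_rfl hB

lemma abs_one_sub_sq_mul_div_sub_one_le {t w a : ℝ} (ht : t ∈ Set.Icc (-1) 1) (h : |w| ≤ |a|) :
    |(1 - t ^ 2) * w / (-2 * a * (t - 1))| ≤ (1 + t) / 2 := by
  obtain ⟨ht₁, ht₂⟩ := ht
  rcases eq_or_ne t 1 with rfl | ht
  · simp
  rcases eq_or_ne a 0 with rfl | ha
  · rw [mul_zero, zero_mul, div_zero, abs_zero]
    linarith
  have : (1 - t ^ 2) * w / (-2 * a * (t - 1)) = (1 + t) / 2 * (w / a) := by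
    have : t - 1 ≠ 0 := sub_ne_zero.mpr ht
    field_simp
    ring
  rw [this, abs_mul, abs_of_nonneg (by linarith), abs_div]
  have : |w| / |a| ≤ 1 := div_le_one_of_le₀ h (abs_nonneg a)
  nlinarith

theorem stmt_14_general (E : Set ℝ) (hE : IsCompact E) (hE1 : E ⊆ Set.Icc (-1 : ℝ) 1)
    (h1 : (1 : ℝ) ∈ E) (hm1 : (-1 : ℝ) ∈ E)
    (n : ℕ) (x : Fin n → ℝ)
    (ω Ω : ℝ → ℝ)
    (hω : ∀ t, ω t = ∏ k, (t - x k))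
    (hΩ : ∀ t, Ω t = (1 - t^2) * ω t)
    (hmax1 : ∀ t ∈ E, |ω t| ≤ |ω 1|)
    (hmaxm1 : |ω (-1)| = |ω 1|)
    (Λω ΛΩ : ℝ)
    (hΛω : Λω = sSup ((fun t => ∑ k, |ω t / (deriv ω (x k) * (t - x k))|) '' E))
    (hΛΩ : ΛΩ = sSup ((fun t =>
        (∑ k, |Ω t / (deriv Ω (x k) * (t - x k))|)
        + |Ω t / (deriv Ω 1 * (t - 1))|
        + |Ω t / (deriv Ω (-1) * (t - (-1)))|) '' E)) :
    ΛΩ ≤ 5 * Λω + 1 := by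
  have hdiff : Differentiable ℝ ω := by
    rw [show ω = fun t => ∏ k, (t - x k) from funext hω]
    fun_prop
  have hdΩ : ∀ p, deriv Ω p = -2 * p * ω p + (1 - p ^ 2) * deriv ω p := fun p => by
    rw [show Ω = fun t => (1 - t ^ 2) * ω t from funext hΩ, deriv_one_sub_sq_mul (hdiff p)]
  have hωx : ∀ k, ω (x k) = 0 := fun k => by
    rw [hω]
    exact prod_eq_zero (mem_univ k) (sub_self _)
  have hle : ∀ t ∈ E, lebesgueFun ω x t ≤ Λω := fun t ht =>
    hΛω ▸ le_csSup (bddAbove_lebesgueFun_image hE hω) ⟨t, ht, rfl⟩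
  have hΛω_nonneg : 0 ≤ Λω := (lebesgueFun_nonneg ω x 1).trans (hle 1 h1)
  rw [hΛΩ]
  refine csSup_le ⟨_, 1, h1, rfl⟩ ?_
  rintro _ ⟨t, ht, rfl⟩
  have hmaxm1' : |ω t| ≤ |ω (-1)| := hmaxm1 ▸ hmax1 t ht
  have hnodes : ∑ k, |Ω t / (deriv Ω (x k) * (t - x k))| ≤
      lebesgueFun ω x t + lebesgueFun ω x 1 + lebesgueFun ω x (-1) := by
    simp only [lebesgueFun, ← sum_add_distrib]
    gcongr with k
    rw [hΩ, hdΩ, hωx, mul_zero, zero_add]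
    exact abs_one_sub_sq_mul_div_le (hE1 ht) (hmax1 t ht) hmaxm1'
  have hright : |Ω t / (deriv Ω 1 * (t - 1))| ≤ (1 + t) / 2 := by
    rw [hΩ, hdΩ]
    convert abs_one_sub_sq_mul_div_sub_one_le (hE1 ht) (hmax1 t ht) using 3
    ring
  have hleft : |Ω t / (deriv Ω (-1) * (t - (-1)))| ≤ (1 - t) / 2 := by
    have ht' : -t ∈ Set.Icc (-1 : ℝ) 1 := ⟨by linarith [(hE1 ht).2], by linarith [(hE1 ht).1]⟩
    rw [hΩ, hdΩ]
    convert abs_one_sub_sq_mul_div_sub_one_le ht' hmaxm1' using 3 <;> ring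
  linarith [hle t ht, hle 1 h1, hle (-1) hm1]

theorem stmt_14 (E : Set ℝ) (hE : IsCompact E) (hE1 : E ⊆ Set.Icc (-1 : ℝ) 1)
    (h1 : (1 : ℝ) ∈ E) (hm1 : (-1 : ℝ) ∈ E)
    (n : ℕ) (x : Fin n → ℝ)
    (hxE : ∀ k, x k ∈ E) (hxI : ∀ k, x k ∈ Set.Ioo (-1 : ℝ) 1)
    (hord : ∀ i j : Fin n, i < j → x j < x i)
    (ω Ω : ℝ → ℝ)
    (hω : ∀ t, ω t = ∏ k, (t - x k))
    (hΩ : ∀ t, Ω t = (1 - t^2) * ω t)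
    (hmax1 : ∀ t ∈ E, |ω t| ≤ |ω 1|)
    (hmaxm1 : |ω (-1)| = |ω 1|)
    (Λω ΛΩ : ℝ)
    (hΛω : Λω = sSup ((fun t => ∑ k, |ω t / (deriv ω (x k) * (t - x k))|) '' E))
    (hΛΩ : ΛΩ = sSup ((fun t =>
        (∑ k, |Ω t / (deriv Ω (x k) * (t - x k))|)
        + |Ω t / (deriv Ω 1 * (t - 1))|
        + |Ω t / (deriv Ω (-1) * (t - (-1)))|) '' E)) :
    ΛΩ ≤ 5 * Λω + 1 :=
  stmt_14_general E hE hE1 h1 hm1 n x ω Ω hω hΩ hmax1 hmaxm1 Λω ΛΩ hΛω hΛΩ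
end

section
/- Let 0 < a < 1, n ≥ 1, and consider the 2n nodes x_{±k} = ±√(((1-a^2)/2)cos((2k-1)π/(2n)) + (1+a^2)/2), k = 1,…,n, on E(a) = [-1,-a] ∪ [a,1], with nodal polynomial ω_{2n}(x) = ∏_{1≤|k|≤n}(x - x_k). Then the Lebesgue constant satisfies λ_{2n}(ω_{2n}, E(a)) = sup_{x∈E(a)} ∑_{1≤|k|≤n} |ω_{2n}(x)/(ω_{2n}'(x_k)(x - x_k))| ≤ (1/a)·Λ_n + (1-a^2)/(8a^2), where Λ_n is the Lebesgue constant of Lagrange interpolation at the n Chebyshev nodes cos((2k-1)π/(2n)) on [-1,1]. -/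
/-!
The substitution `y(x) = (2x² - 1 - a²)/(1 - a²)` maps `E(a)` two-to-one onto `[-1, 1]` and
sends `±x_k` to the Chebyshev node `y_k`, so `ω_{2n}` is a constant multiple of `T_n ∘ y`. For such
a composition, the fundamental functions of the pair `±x_k` are `±ℓ_k(y(x)) (x ± x_k)/(2x_k)`, with
`ℓ_k` the Chebyshev fundamental function, and `|x + x_k| + |x - x_k| ≤ 2 ≤ 2x_k/a` on `E(a)`.
Hence each pair of terms of the Lebesgue function on `E(a)` is dominated by `1/a` times the
corresponding term of the Chebyshev Lebesgue function at `y(x) ∈ [-1, 1]`.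
-/

open Polynomial Real Finset

theorem eval_T_real_eq_prod (n : ℕ) (s : ℝ) :
    (Chebyshev.T ℝ n).eval s =
      2 ^ (n - 1) * ∏ k ∈ Icc 1 n, (s - cos ((2 * k - 1) * π / (2 * n))) := by
  have hinj : Set.InjOn (fun k : ℕ ↦ cos ((2 * k + 1) * π / (2 * n))) (range n) :=
    (range n).nodup_map_iff_injOn.mp (Chebyshev.roots_T_real_nodup n)
  have hcard : Multiset.card (Chebyshev.T ℝ n).roots = (Chebyshev.T ℝ n).natDegree := by
    rw [Chebyshev.roots_T_real, card_val, card_image_of_injOn hinj]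
    simp
  rw [← C_leadingCoeff_mul_prod_multiset_X_sub_C hcard, Chebyshev.roots_T_real,
    ← prod_eq_multiset_prod, prod_image hinj, ← Ico_add_one_right_eq_Icc,
    prod_Ico_eq_prod_range, Nat.add_sub_cancel]
  simp only [Chebyshev.leadingCoeff_T, Int.natAbs_natCast, eval_mul, eval_C, eval_prod, eval_sub,
    eval_X]
  refine congrArg _ (prod_congr rfl fun k _ ↦ ?_)
  push_cast
  ring_nf

theorem isRoot_T_real_cos {n : ℕ} (hn : n ≠ 0) (k : ℕ) :
    (Chebyshev.T ℝ n).IsRoot (cos ((2 * k - 1) * π / (2 * n))) := by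
  rw [IsRoot, Chebyshev.T_real_cos, cos_eq_zero_iff]
  refine ⟨k - 1, ?_⟩
  field_simp
  push_cast
  ring

/-- The Lagrange fundamental function of the node `x` of `f`. At `t = x` it is `0`, not `1`,
since `_ / 0 = 0`. -/
noncomputable def nodalBasis (f : ℝ → ℝ) (x t : ℝ) : ℝ := f t / (deriv f x * (t - x))

theorem nodalBasis_self (f : ℝ → ℝ) (x : ℝ) : nodalBasis f x x = 0 := by
  simp [nodalBasis]

theorem nodalBasis_const_mul (f : ℝ → ℝ) {c : ℝ} (hc : c ≠ 0) (x t : ℝ) :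
    nodalBasis (fun s ↦ c * f s) x t = nodalBasis f x t := by
  simp only [nodalBasis, deriv_const_mul_field', mul_assoc, mul_div_mul_left _ _ hc]

theorem abs_nodalBasis_le_of_isRoot (P : ℝ[X]) {x : ℝ} (hx : P.IsRoot x) (t : ℝ) :
    |nodalBasis (fun s ↦ P.eval s) x t| ≤ |(P /ₘ (X - C x)).eval t / P.derivative.eval x| := by
  rcases eq_or_ne t x with rfl | htx
  · simp [nodalBasis_self]
  have hfactor : P.eval t = (t - x) * (P /ₘ (X - C x)).eval t := by
    conv_lhs => rw [← mul_divByMonic_eq_iff_isRoot.mpr hx]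
    simp
  rw [nodalBasis, Polynomial.deriv, hfactor, mul_comm (P.derivative.eval x),
    mul_div_mul_left _ _ (sub_ne_zero.mpr htx)]

theorem bddAbove_sum_abs_nodalBasis (P : ℝ[X]) {ι : Type*} (S : Finset ι) {x : ι → ℝ}
    (hx : ∀ k ∈ S, P.IsRoot (x k)) {K : Set ℝ} (hK : IsCompact K) :
    BddAbove ((fun t ↦ ∑ k ∈ S, |nodalBasis (fun s ↦ P.eval s) (x k) t|) '' K) := by
  obtain ⟨M, hM⟩ := hK.bddAbove_image (f := fun t ↦
    ∑ k ∈ S, |(P /ₘ (X - C (x k))).eval t / P.derivative.eval (x k)|) (by fun_prop)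
  refine ⟨M, ?_⟩
  rintro _ ⟨t, ht, rfl⟩
  exact (sum_le_sum fun k hk ↦ abs_nodalBasis_le_of_isRoot P (hx k hk) t).trans
    (hM ⟨t, ht, rfl⟩)

theorem nodalBasis_comp_quadratic {f : ℝ → ℝ} {α β r : ℝ} (hα : α ≠ 0) (hr : r ≠ 0)
    (hf : DifferentiableAt ℝ f (α * r ^ 2 - β)) (hroot : f (α * r ^ 2 - β) = 0) (t : ℝ) :
    nodalBasis (fun t ↦ f (α * t ^ 2 - β)) r t =
      nodalBasis f (α * r ^ 2 - β) (α * t ^ 2 - β) * ((t + r) / (2 * r)) := by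
  have hderiv :
      deriv (fun t ↦ f (α * t ^ 2 - β)) r = deriv f (α * r ^ 2 - β) * (2 * α * r) := by
    have hu : HasDerivAt (fun t : ℝ ↦ α * t ^ 2 - β) (2 * α * r) r := by
      simpa [mul_comm, mul_left_comm] using ((hasDerivAt_pow 2 r).const_mul α).sub_const β
    exact (hf.hasDerivAt.comp r hu).deriv
  by_cases ht : t ^ 2 = r ^ 2
  · rcases sq_eq_sq_iff_eq_or_eq_neg.mp ht with rfl | rfl
    · simp [nodalBasis_self]
    · simp [nodalBasis, hroot]
  have htr : t - r ≠ 0 := fun h ↦ ht (by rw [sub_eq_zero.mp h])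
  have htr' : t + r ≠ 0 := fun h ↦ ht (by rw [eq_neg_of_add_eq_zero_left h, neg_sq])
  rcases eq_or_ne (deriv f (α * r ^ 2 - β)) 0 with hd | hd
  · simp [nodalBasis, hderiv, hd]
  rw [nodalBasis, nodalBasis, hderiv,
    show α * t ^ 2 - β - (α * r ^ 2 - β) = α * (t - r) * (t + r) by ring]
  field_simp

theorem abs_add_add_abs_sub_div_le {a r t : ℝ} (ha : 0 < a) (har : a ≤ r) (hr : r ≤ 1)
    (ht : |t| ≤ 1) : (|t + r| + |t - r|) / (2 * r) ≤ 1 / a := by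
  have hr0 : 0 < r := ha.trans_le har
  have hsum : |t + r| + |t - r| ≤ 2 := by
    rw [abs_le] at ht
    cases abs_cases (t + r) <;> cases abs_cases (t - r) <;> linarith
  calc (|t + r| + |t - r|) / (2 * r) ≤ 2 / (2 * r) := by gcongr
    _ = 1 / r := by field_simp
    _ ≤ 1 / a := by gcongr

theorem abs_nodalBasis_comp_quadratic_add_le {f : ℝ → ℝ} {α β a r t : ℝ} (hα : α ≠ 0)
    (ha : 0 < a) (har : a ≤ r) (hr : r ≤ 1) (ht : |t| ≤ 1)
    (hf : DifferentiableAt ℝ f (α * r ^ 2 - β)) (hroot : f (α * r ^ 2 - β) = 0) :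
    |nodalBasis (fun t ↦ f (α * t ^ 2 - β)) r t| +
        |nodalBasis (fun t ↦ f (α * t ^ 2 - β)) (-r) t|
      ≤ 1 / a * |nodalBasis f (α * r ^ 2 - β) (α * t ^ 2 - β)| := by
  have hr0 : 0 < r := ha.trans_le har
  rw [nodalBasis_comp_quadratic hα hr0.ne' hf hroot,
    nodalBasis_comp_quadratic hα (neg_ne_zero.mpr hr0.ne') (by rwa [neg_sq]) (by rwa [neg_sq]),
    neg_sq]
  calc _ = |nodalBasis f (α * r ^ 2 - β) (α * t ^ 2 - β)| *
        ((|t + r| + |t - r|) / (2 * r)) := by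
        rw [abs_mul, abs_mul, abs_div, abs_div, abs_of_pos (by positivity : (0:ℝ) < 2 * r),
          abs_of_neg (by linarith : 2 * -r < 0), ← sub_eq_add_neg]
        ring
    _ ≤ |nodalBasis f (α * r ^ 2 - β) (α * t ^ 2 - β)| * (1 / a) :=
        mul_le_mul_of_nonneg_left (abs_add_add_abs_sub_div_le ha har hr ht) (abs_nonneg _)
    _ = _ := mul_comm _ _

theorem sum_abs_nodalBasis_comp_quadratic_le {ι : Type*} (S : Finset ι) {f : ℝ → ℝ}
    {α β a t : ℝ} {r y : ι → ℝ} (hα : α ≠ 0) (ha : 0 < a) (hr : ∀ k ∈ S, r k ∈ Set.Icc a 1)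
    (hry : ∀ k ∈ S, α * r k ^ 2 - β = y k) (hf : ∀ k ∈ S, DifferentiableAt ℝ f (y k))
    (hroot : ∀ k ∈ S, f (y k) = 0) (ht : |t| ≤ 1) :
    ∑ k ∈ S, (|nodalBasis (fun t ↦ f (α * t ^ 2 - β)) (r k) t| +
        |nodalBasis (fun t ↦ f (α * t ^ 2 - β)) (-r k) t|)
      ≤ 1 / a * ∑ k ∈ S, |nodalBasis f (y k) (α * t ^ 2 - β)| := by
  rw [mul_sum]
  refine sum_le_sum fun k hk ↦ hry k hk ▸ ?_
  exact abs_nodalBasis_comp_quadratic_add_le hα ha (hr k hk).1 (hr k hk).2 ht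
    ((hry k hk).symm ▸ hf k hk) ((hry k hk).symm ▸ hroot k hk)

theorem prod_sub_mul_sub_neg_eq {ι : Type*} (S : Finset ι) {α β : ℝ} (hα : α ≠ 0)
    {x y : ι → ℝ} (hxy : ∀ k ∈ S, α * x k ^ 2 - β = y k) (t : ℝ) :
    ∏ k ∈ S, (t - x k) * (t - -x k) = (α ^ #S)⁻¹ * ∏ k ∈ S, (α * t ^ 2 - β - y k) := by
  rw [← inv_pow, ← prod_const, ← prod_mul_distrib]
  refine prod_congr rfl fun k hk ↦ ?_
  rw [← hxy k hk]
  field_simp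
  ring

section Annulus

variable {a : ℝ}

/-- The paper's `y(x) = (2x² - 1 - a²)/(1 - a²)`, written as `α x² - β`. -/
noncomputable def annulusMap (a t : ℝ) : ℝ := 2 / (1 - a ^ 2) * t ^ 2 - (1 + a ^ 2) / (1 - a ^ 2)

/-- The positive preimage of `y` under `annulusMap a`. -/
noncomputable def annulusNode (a y : ℝ) : ℝ := √((1 - a ^ 2) / 2 * y + (1 + a ^ 2) / 2)

theorem annulusNode_mem_Icc (ha : 0 < a) (ha1 : a < 1) {y : ℝ} (hy : y ∈ Set.Icc (-1) 1) :
    annulusNode a y ∈ Set.Icc a 1 := by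
  obtain ⟨hy1, hy2⟩ := hy
  have ha2 : 0 ≤ 1 - a ^ 2 := by nlinarith
  constructor
  · exact le_sqrt_of_sq_le (by nlinarith [mul_nonneg ha2 (by linarith : 0 ≤ y + 1)])
  · exact sqrt_le_one.mpr (by nlinarith [mul_nonneg ha2 (by linarith : 0 ≤ 1 - y)])

theorem annulusMap_annulusNode (ha : 0 < a) (ha1 : a < 1) {y : ℝ} (hy : -1 ≤ y) :
    annulusMap a (annulusNode a y) = y := by
  have ha2 : 0 < 1 - a ^ 2 := by nlinarith
  rw [annulusMap, annulusNode, sq_sqrt (by nlinarith [mul_nonneg ha2.le (by linarith : 0 ≤ y + 1)])]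
  field_simp
  ring

theorem annulusMap_mem_Icc (ha : 0 < a) (ha1 : a < 1) {t : ℝ}
    (ht : t ∈ Set.Icc (-1) (-a) ∪ Set.Icc a 1) : annulusMap a t ∈ Set.Icc (-1) 1 := by
  have ha2 : 0 < 1 - a ^ 2 := by nlinarith
  have ht2 : a ^ 2 ≤ t ^ 2 ∧ t ^ 2 ≤ 1 := by
    rcases ht with ⟨h1, h2⟩ | ⟨h1, h2⟩ <;> constructor <;> nlinarith
  rw [annulusMap, div_mul_eq_mul_div, div_sub_div_same, Set.mem_Icc, le_div_iff₀ ha2,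
    div_le_one ha2]
  constructor <;> nlinarith

theorem abs_le_one_of_mem_union {t : ℝ} (ha : 0 < a) (ht : t ∈ Set.Icc (-1) (-a) ∪ Set.Icc a 1) :
    |t| ≤ 1 := by
  rw [abs_le]
  rcases ht with ⟨h1, h2⟩ | ⟨h1, h2⟩ <;> constructor <;> linarith

theorem prod_sub_annulusNode_mul_sub_neg_eq (ha : 0 < a) (ha1 : a < 1) {n : ℕ} {y : ℕ → ℝ}
    (hy : ∀ k, y k = cos ((2 * k - 1) * π / (2 * n))) (t : ℝ) :
    ∏ k ∈ Icc 1 n, (t - annulusNode a (y k)) * (t - -annulusNode a (y k)) =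
      ((2 / (1 - a ^ 2)) ^ n * 2 ^ (n - 1))⁻¹ * (Chebyshev.T ℝ n).eval (annulusMap a t) := by
  have hα : 2 / (1 - a ^ 2) ≠ 0 := div_ne_zero two_ne_zero (by nlinarith)
  rw [prod_sub_mul_sub_neg_eq _ hα fun k _ ↦
      annulusMap_annulusNode ha ha1 (hy k ▸ neg_one_le_cos _),
    annulusMap, eval_T_real_eq_prod, Nat.card_Icc, Nat.add_sub_cancel]
  simp only [← hy]
  field_simp

end Annulus

theorem stmt_17_general (a : ℝ) (ha : 0 < a) (ha' : a < 1) (n : ℕ)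
    (E : Set ℝ) (hE : E = Set.Icc (-1 : ℝ) (-a) ∪ Set.Icc a 1)
    (y : ℕ → ℝ) (hy : ∀ k, y k = Real.cos ((2*k - 1)*Real.pi / (2*n)))
    (xp xm : ℕ → ℝ)
    (hxp : ∀ k, xp k = Real.sqrt ((1 - a^2)/2 * y k + (1 + a^2)/2))
    (hxm : ∀ k, xm k = -Real.sqrt ((1 - a^2)/2 * y k + (1 + a^2)/2))
    (ω : ℝ → ℝ)
    (hω : ∀ t, ω t = ∏ k ∈ Finset.Icc 1 n, ((t - xp k) * (t - xm k)))
    (Λn lam : ℝ)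
    (hΛn : Λn = sSup ((fun t => ∑ k ∈ Finset.Icc 1 n,
        |(Polynomial.Chebyshev.T ℝ n).eval t /
          ((Polynomial.derivative (Polynomial.Chebyshev.T ℝ n)).eval (y k) * (t - y k))|)
        '' Set.Icc (-1 : ℝ) 1))
    (hlam : lam = sSup ((fun t => ∑ k ∈ Finset.Icc 1 n,
        (|ω t / (deriv ω (xp k) * (t - xp k))| +
         |ω t / (deriv ω (xm k) * (t - xm k))|)) '' E)) :
    lam ≤ (1/a) * Λn + (1 - a^2)/(8*a^2) := by
  subst hE
  obtain rfl : xp = fun k ↦ annulusNode a (y k) := funext hxp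
  obtain rfl : xm = fun k ↦ -annulusNode a (y k) := funext hxm
  obtain rfl : ω = _ :=
    funext fun t ↦ (hω t).trans (prod_sub_annulusNode_mul_sub_neg_eq ha ha' hy t)
  set c : ℝ := ((2 / (1 - a ^ 2)) ^ n * 2 ^ (n - 1))⁻¹
  set T := Chebyshev.T ℝ n
  have hα : 2 / (1 - a ^ 2) ≠ 0 := div_ne_zero two_ne_zero (by nlinarith)
  have hc : c ≠ 0 := inv_ne_zero (mul_ne_zero (pow_ne_zero _ hα) (by positivity))
  have hyI (k : ℕ) : y k ∈ Set.Icc (-1) 1 := hy k ▸ ⟨neg_one_le_cos _, cos_le_one _⟩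
  have hroot : ∀ k ∈ Icc 1 n, T.IsRoot (y k) := fun k hk ↦ hy k ▸ isRoot_T_real_cos (by grind) k
  have hΛ : Λn = sSup ((fun s ↦ ∑ k ∈ Icc 1 n, |nodalBasis (fun s ↦ T.eval s) (y k) s|) ''
      Set.Icc (-1) 1) := by
    simp only [hΛn, nodalBasis, Polynomial.deriv]
  have hΛ0 : 0 ≤ Λn := hΛ ▸ Real.sSup_nonneg (by rintro _ ⟨s, -, rfl⟩; positivity)
  have hrem : 0 ≤ (1 - a ^ 2) / (8 * a ^ 2) := div_nonneg (by nlinarith) (by positivity)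
  rw [hlam]
  refine Real.sSup_le ?_ (by positivity)
  rintro _ ⟨t, ht, rfl⟩
  calc _ ≤ 1 / a * ∑ k ∈ Icc 1 n, |nodalBasis (fun s ↦ T.eval s) (y k) (annulusMap a t)| := by
        have h := sum_abs_nodalBasis_comp_quadratic_le (Icc 1 n) (f := fun s ↦ c * T.eval s) hα ha
          (fun k _ ↦ annulusNode_mem_Icc ha ha' (hyI k))
          (fun k _ ↦ annulusMap_annulusNode ha ha' (hyI k).1) (fun k _ ↦ by fun_prop)
          (fun k hk ↦ mul_eq_zero_of_right c (hroot k hk)) (abs_le_one_of_mem_union ha ht)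
        simp only [nodalBasis_const_mul (fun s ↦ T.eval s) hc] at h
        exact h
    _ ≤ 1 / a * Λn := by
        gcongr
        exact hΛ ▸ le_csSup (bddAbove_sum_abs_nodalBasis T _ hroot isCompact_Icc)
          ⟨_, annulusMap_mem_Icc ha ha' ht, rfl⟩
    _ ≤ _ := le_add_of_nonneg_right hrem

theorem stmt_17 (a : ℝ) (ha : 0 < a) (ha' : a < 1) (n : ℕ) (hn : 1 ≤ n)
    (E : Set ℝ) (hE : E = Set.Icc (-1 : ℝ) (-a) ∪ Set.Icc a 1)
    (y : ℕ → ℝ) (hy : ∀ k, y k = Real.cos ((2*k - 1)*Real.pi / (2*n)))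
    (xp xm : ℕ → ℝ)
    (hxp : ∀ k, xp k = Real.sqrt ((1 - a^2)/2 * y k + (1 + a^2)/2))
    (hxm : ∀ k, xm k = -Real.sqrt ((1 - a^2)/2 * y k + (1 + a^2)/2))
    (ω : ℝ → ℝ)
    (hω : ∀ t, ω t = ∏ k ∈ Finset.Icc 1 n, ((t - xp k) * (t - xm k)))
    (Λn lam : ℝ)
    (hΛn : Λn = sSup ((fun t => ∑ k ∈ Finset.Icc 1 n,
        |(Polynomial.Chebyshev.T ℝ n).eval t /
          ((Polynomial.derivative (Polynomial.Chebyshev.T ℝ n)).eval (y k) * (t - y k))|)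
        '' Set.Icc (-1 : ℝ) 1))
    (hlam : lam = sSup ((fun t => ∑ k ∈ Finset.Icc 1 n,
        (|ω t / (deriv ω (xp k) * (t - xp k))| +
         |ω t / (deriv ω (xm k) * (t - xm k))|)) '' E)) :
    lam ≤ (1/a) * Λn + (1 - a^2)/(8*a^2) :=
  stmt_17_general a ha ha' n E hE y hy xp xm hxp hxm ω hω Λn lam hΛn hlam
end

section
/- Let -1 < z < a < 1/2 and let p be the cubic polynomial with p(-1) = p(a) = -1, p(z) = p(1) = 1 given by p(x) = (x-z)(x-a)(x-1)/(2(1+z)(1+a)) - (x^2-1)(x-a)/((1-z^2)(z-a)) - (x^2-1)(x-z)/((1-a^2)(z-a)) + (x+1)(x-z)(x-a)/(2(1-z)(1-a)). If additionally p'(z) = 0, then p is strictly increasing on [-1, z] and strictly decreasing on [z, a]. -/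
/-!
Differentiating the interpolation formula gives
`p'(x) = ((x - z) ℓ(x) - (1 - z) G) / ((1 + z)(1 - a)(a - z))` with `ℓ` affine and
`G = (a - z - 1)² + 2z + 1`. The condition `p'(z) = 0` forces `G = 0`, and together with
`-1 < z`, `a < 1/2` this gives `a + z < 0`, which makes `ℓ` negative on `(-∞, a]`.
Hence `p'` has the sign of `z - x` on `(-1, a)`.
-/

noncomputable def interpCubic (a z x : ℝ) : ℝ :=
  (x - z)*(x - a)*(x - 1) / (2*(1 + z)*(1 + a))
    - (x^2 - 1)*(x - a) / ((1 - z^2)*(z - a))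
    - (x^2 - 1)*(x - z) / ((1 - a^2)*(z - a))
    + (x + 1)*(x - z)*(x - a) / (2*(1 - z)*(1 - a))

theorem hasDerivAt_interpCubic {a z : ℝ} (hz₁ : 1 + z ≠ 0) (hz₂ : 1 - z ≠ 0)
    (ha₁ : 1 + a ≠ 0) (ha₂ : 1 - a ≠ 0) (hza : a - z ≠ 0) (x : ℝ) :
    HasDerivAt (interpCubic a z)
      (((x - z) * (3*(2 + z - a)*x + 2*a^2 - 3*a*z - 2*a + z^2 + 4*z)
        - (1 - z) * ((a - z - 1)^2 + 2*z + 1)) / ((1 + z) * (1 - a) * (a - z))) x := by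
  have hx : HasDerivAt (fun x : ℝ => x) 1 x := hasDerivAt_id x
  have h := ((((((hx.sub_const z).mul (hx.sub_const a)).mul (hx.sub_const 1)).div_const
      (2*(1 + z)*(1 + a))).sub ((((hx.pow 2).sub_const 1).mul (hx.sub_const a)).div_const
      ((1 - z^2)*(z - a)))).sub ((((hx.pow 2).sub_const 1).mul (hx.sub_const z)).div_const
      ((1 - a^2)*(z - a)))).add ((((hx.add_const 1).mul (hx.sub_const z)).mul
      (hx.sub_const a)).div_const (2*(1 - z)*(1 - a)))
  refine h.congr_deriv ?_
  have hza' : z - a ≠ 0 := by rwa [← neg_sub, neg_ne_zero]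
  have hz : 1 - z^2 ≠ 0 := by
    rw [show 1 - z^2 = (1 + z) * (1 - z) by ring]; exact mul_ne_zero hz₁ hz₂
  have ha : 1 - a^2 ≠ 0 := by
    rw [show 1 - a^2 = (1 + a) * (1 - a) by ring]; exact mul_ne_zero ha₁ ha₂
  simp only [Pi.mul_apply, Pi.pow_apply, Nat.cast_ofNat]
  field_simp
  ring

theorem add_neg_of_sq_add_eq_zero {a z : ℝ} (hz : -1 < z) (ha : a < 1/2)
    (h : (a - z - 1)^2 + 2*z + 1 = 0) : a + z < 0 := by
  -- with `u = a - z - 1`: `u² < 1` from `-1 < z`, `u (2 - u) < 0` from `a < 1/2`, and `a + z = u (1 - u)`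
  have hu₁ : a - z - 1 < 1 := by nlinarith
  have hu₀ : a - z - 1 < 0 := by nlinarith
  nlinarith

theorem linear_factor_neg {a z x : ℝ} (hsum : a + z < 0) (hgap : a - z < 2) (hx : x ≤ a) :
    3*(2 + z - a)*x + 2*a^2 - 3*a*z - 2*a + z^2 + 4*z < 0 := by
  nlinarith [mul_nonneg (by linarith : (0:ℝ) ≤ 2 + z - a) (by linarith : 0 ≤ a - x),
    mul_neg_of_neg_of_pos hsum (by linarith : (0:ℝ) < 4 + z - a)]

theorem stmt_19 (a z : ℝ) (hz : -1 < z) (hza : z < a) (ha : a < 1/2)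
    (p : ℝ → ℝ)
    (hp : ∀ x, p x = (x - z)*(x - a)*(x - 1) / (2*(1 + z)*(1 + a))
        - (x^2 - 1)*(x - a) / ((1 - z^2)*(z - a))
        - (x^2 - 1)*(x - z) / ((1 - a^2)*(z - a))
        + (x + 1)*(x - z)*(x - a) / (2*(1 - z)*(1 - a)))
    (hcrit : deriv p z = 0) :
    StrictMonoOn p (Set.Icc (-1 : ℝ) z) ∧ StrictAntiOn p (Set.Icc z a) := by
  obtain rfl : p = interpCubic a z := funext hp
  have hz₂ : (0:ℝ) < 1 - z := by linarith
  have ha₂ : (0:ℝ) < 1 - a := by linarith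
  have hden : 0 < (1 + z) * (1 - a) * (a - z) :=
    mul_pos (mul_pos (by linarith) ha₂) (by linarith)
  have hp' := hasDerivAt_interpCubic (by linarith) hz₂.ne' (by linarith) ha₂.ne' (by linarith)
  have hG : (a - z - 1)^2 + 2*z + 1 = 0 := by
    rw [(hp' z).deriv, div_eq_zero_iff, or_iff_left hden.ne', sub_self, zero_mul, zero_sub,
      neg_eq_zero] at hcrit
    exact (mul_eq_zero.1 hcrit).resolve_left hz₂.ne'
  have hsum := add_neg_of_sq_add_eq_zero hz ha hG
  have hcont : Continuous (interpCubic a z) :=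
    continuous_iff_continuousAt.2 fun x => (hp' x).continuousAt
  have hderiv : ∀ x, deriv (interpCubic a z) x =
      (x - z) * (3*(2 + z - a)*x + 2*a^2 - 3*a*z - 2*a + z^2 + 4*z) / ((1 + z) * (1 - a) * (a - z)) :=
    fun x => by rw [(hp' x).deriv, hG, mul_zero, sub_zero]
  constructor
  · refine strictMonoOn_of_deriv_pos (convex_Icc _ _) hcont.continuousOn fun x hx => ?_
    rw [interior_Icc] at hx
    rw [hderiv]
    exact div_pos (mul_pos_of_neg_of_neg (by linarith [hx.2])
      (linear_factor_neg hsum (by linarith) (by linarith [hx.2]))) hden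
  · refine strictAntiOn_of_deriv_neg (convex_Icc _ _) hcont.continuousOn fun x hx => ?_
    rw [interior_Icc] at hx
    rw [hderiv]
    exact div_neg_of_neg_of_pos (mul_neg_of_pos_of_neg (by linarith [hx.1])
      (linear_factor_neg hsum (by linarith) hx.2.le)) hden
end
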